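/- Let η = (K1, K2, K3, K4, κ3, κ6, κ9, κ12) be a tuple of positive real parameters. Then either p_η(x1,x2,x3) > 0 for all x1 > 0, x2 > 0, x3 > 0, or there exist x1 > 0, x2 > 0, x3 > 0 with p_η(x1,x2,x3) < 0; equivalently, if p_η is nonnegative on the positive orthant then it is strictly positive on the positive orthant. -/

import Mathlib

/-!
Scaling `(x₁, x₂) ↦ (t x₁, t x₂)` turns `p_η` into `t⁴ f(t, x₃)` with
`f(t, y) = a α y² + (a β t + b) y + (γ t + c)`, where `a = κ₃κ₁₂ - κ₆κ₉`, `α, β, γ > 0` and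
`c ≥ 0`. If `p_η ≥ 0` vanished at a point of the open orthant, that point would be an interior
minimum, so both partial derivatives of `f` would vanish there. In `y` this gives
`a α y² = γ + c > 0`, hence `a > 0`; in `t` it gives `a β y + γ = 0`, hence `a < 0`.
-/

open Set

/-- The trivariate polynomial `p_η` governing monostationarity of dual phosphorylation. -/
def pEta (K1 K2 K3 K4 κ3 κ6 κ9 κ12 x1 x2 x3 : ℝ) : ℝ :=
  K2 * κ3 * (κ3 * κ12 - κ6 * κ9) *
      (K2 * K4 * κ3 * κ9 * x1 ^ 4 * x3 ^ 2
        + K1 * K3 * κ6 * κ12 *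
            (x1 ^ 3 * x2 ^ 2 * x3 + x1 ^ 2 * x2 ^ 3 * x3 + x1 ^ 2 * x2 ^ 2 * x3 ^ 2)
        + K2 * K3 * κ3 * κ12 * x1 ^ 3 * x2 * x3 ^ 2)
    + K1 * K2 * K3 * κ3 * κ6 * κ12 * ((K2 + K3) * κ3 * κ12 - (K1 + K4) * κ6 * κ9)
        * x1 ^ 2 * x2 ^ 2 * x3
    + K1 * κ6 *
        (K2 ^ 2 * K4 * κ3 ^ 2 * κ9 ^ 2 * x1 ^ 4 * x3
          + 2 * K2 * K3 * K4 * κ3 ^ 2 * κ9 * κ12 * x1 ^ 3 * x2 * x3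
          + K1 * K2 * K3 * κ3 * κ6 * κ12 * (κ9 + κ12) * x1 ^ 2 * x2 ^ 3
          + K1 * K2 * K3 * K4 * κ3 * κ6 * κ9 * κ12 * x1 ^ 2 * x2 ^ 2
          + K1 * K3 ^ 2 * κ6 * κ12 ^ 2 * (κ3 + κ6) * x1 * x2 ^ 4
          + 2 * K1 * K2 * K3 * κ3 * κ6 * κ12 ^ 2 * x1 * x2 ^ 3 * x3
          + K1 * K2 * K3 ^ 2 * κ3 * κ6 * κ12 ^ 2 * x1 * x2 ^ 3
          + K1 * K3 ^ 2 * κ6 ^ 2 * κ12 ^ 2 * x2 ^ 4 * x3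
          + K1 ^ 2 * K3 ^ 2 * κ6 ^ 2 * κ12 ^ 2 * x2 ^ 4)

lemma pos_of_nonneg_of_scaling_family {a b c α β γ : ℝ} (hα : 0 < α) (hβ : 0 < β)
    (hγ : 0 < γ) (hc : 0 ≤ c)
    (hf : ∀ t y, 0 < t → 0 < y → 0 ≤ a * α * y ^ 2 + (a * β * t + b) * y + (γ * t + c))
    {y₀ : ℝ} (hy₀ : 0 < y₀) :
    0 < a * α * y₀ ^ 2 + (a * β + b) * y₀ + (γ + c) := by
  have hf_one : ∀ y, 0 < y → 0 ≤ a * α * y ^ 2 + (a * β + b) * y + (γ + c) := fun y hy => by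
    simpa only [mul_one] using hf 1 y one_pos hy
  by_contra! hle
  have hzero : a * α * y₀ ^ 2 + (a * β + b) * y₀ + (γ + c) = 0 :=
    le_antisymm hle (hf_one y₀ hy₀)
  have hy_crit : 2 * a * α * y₀ + (a * β + b) = 0 := by
    have hmin : IsMinOn (fun y => a * α * y ^ 2 + (a * β + b) * y + (γ + c)) (Ioi 0) y₀ :=
      fun y hy => hzero.le.trans (hf_one y hy)
    refine (hmin.isLocalMin (Ioi_mem_nhds hy₀)).hasDerivAt_eq_zero ?_
    refine ((((hasDerivAt_pow 2 y₀).const_mul (a * α)).fun_add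
      ((hasDerivAt_id' y₀).const_mul (a * β + b))).add_const (γ + c)).congr_deriv ?_
    ring
  have ht_crit : a * β * y₀ + γ = 0 := by
    have hmin : IsMinOn (fun t => a * α * y₀ ^ 2 + (a * β * t + b) * y₀ + (γ * t + c))
        (Ioi 0) 1 := fun t ht => by
      simp only [mem_ofPred_eq, mul_one, hzero]
      exact hf t y₀ ht hy₀
    refine (hmin.isLocalMin (Ioi_mem_nhds one_pos)).hasDerivAt_eq_zero ?_
    refine (((((hasDerivAt_id' 1).const_mul (a * β)).add_const b).mul_const y₀).const_add
      (a * α * y₀ ^ 2) |>.fun_add (((hasDerivAt_id' 1).const_mul γ).add_const c)).congr_deriv ?_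
    ring
  have ha : 0 < a := by
    have hvertex : a * (α * y₀ ^ 2) = γ + c := by linear_combination y₀ * hy_crit - hzero
    exact pos_of_mul_pos_left (hvertex ▸ (by positivity : 0 < γ + c)) (by positivity)
  have : 0 < a * β * y₀ + γ := by positivity
  linarith

lemma pEta_scaling (K1 K2 K3 K4 κ3 κ6 κ9 κ12 : ℝ)
    (hK1 : 0 < K1) (hK2 : 0 < K2) (hK3 : 0 < K3) (hK4 : 0 < K4)
    (hκ3 : 0 < κ3) (hκ6 : 0 < κ6) (hκ9 : 0 < κ9) (hκ12 : 0 < κ12)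
    {x1 x2 : ℝ} (hx1 : 0 < x1) (hx2 : 0 < x2) :
    ∃ α β γ b c : ℝ, 0 < α ∧ 0 < β ∧ 0 < γ ∧ 0 ≤ c ∧ ∀ t y : ℝ,
      pEta K1 K2 K3 K4 κ3 κ6 κ9 κ12 (t * x1) (t * x2) y =
        t ^ 4 * ((κ3 * κ12 - κ6 * κ9) * α * y ^ 2
          + ((κ3 * κ12 - κ6 * κ9) * β * t + b) * y + (γ * t + c)) := by
  refine ⟨K2 * κ3 * (K2 * K4 * κ3 * κ9 * x1 ^ 4 + K1 * K3 * κ6 * κ12 * x1 ^ 2 * x2 ^ 2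
      + K2 * K3 * κ3 * κ12 * x1 ^ 3 * x2),
    K1 * K2 * K3 * κ3 * κ6 * κ12 * (x1 ^ 3 * x2 ^ 2 + x1 ^ 2 * x2 ^ 3),
    K1 * κ6 * (K1 * K2 * K3 * κ3 * κ6 * κ12 * (κ9 + κ12) * x1 ^ 2 * x2 ^ 3
      + K1 * K3 ^ 2 * κ6 * κ12 ^ 2 * (κ3 + κ6) * x1 * x2 ^ 4),
    K1 * K2 * K3 * κ3 * κ6 * κ12 * ((K2 + K3) * κ3 * κ12 - (K1 + K4) * κ6 * κ9)
        * x1 ^ 2 * x2 ^ 2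
      + K1 * κ6 * (K2 ^ 2 * K4 * κ3 ^ 2 * κ9 ^ 2 * x1 ^ 4
        + 2 * K2 * K3 * K4 * κ3 ^ 2 * κ9 * κ12 * x1 ^ 3 * x2
        + 2 * K1 * K2 * K3 * κ3 * κ6 * κ12 ^ 2 * x1 * x2 ^ 3
        + K1 * K3 ^ 2 * κ6 ^ 2 * κ12 ^ 2 * x2 ^ 4),
    K1 * κ6 * (K1 * K2 * K3 * K4 * κ3 * κ6 * κ9 * κ12 * x1 ^ 2 * x2 ^ 2
      + K1 * K2 * K3 ^ 2 * κ3 * κ6 * κ12 ^ 2 * x1 * x2 ^ 3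
      + K1 ^ 2 * K3 ^ 2 * κ6 ^ 2 * κ12 ^ 2 * x2 ^ 4),
    by positivity, by positivity, by positivity, by positivity, fun t y => ?_⟩
  unfold pEta
  ring

lemma pEta_pos_of_nonneg (K1 K2 K3 K4 κ3 κ6 κ9 κ12 : ℝ)
    (hK1 : 0 < K1) (hK2 : 0 < K2) (hK3 : 0 < K3) (hK4 : 0 < K4)
    (hκ3 : 0 < κ3) (hκ6 : 0 < κ6) (hκ9 : 0 < κ9) (hκ12 : 0 < κ12)
    (hp : ∀ x1 x2 x3 : ℝ, 0 < x1 → 0 < x2 → 0 < x3 →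
      0 ≤ pEta K1 K2 K3 K4 κ3 κ6 κ9 κ12 x1 x2 x3)
    {x1 x2 x3 : ℝ} (hx1 : 0 < x1) (hx2 : 0 < x2) (hx3 : 0 < x3) :
    0 < pEta K1 K2 K3 K4 κ3 κ6 κ9 κ12 x1 x2 x3 := by
  obtain ⟨α, β, γ, b, c, hα, hβ, hγ, hc, hscale⟩ :=
    pEta_scaling K1 K2 K3 K4 κ3 κ6 κ9 κ12 hK1 hK2 hK3 hK4 hκ3 hκ6 hκ9 hκ12 hx1 hx2
  have hf : ∀ t y, 0 < t → 0 < y → 0 ≤ (κ3 * κ12 - κ6 * κ9) * α * y ^ 2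
      + ((κ3 * κ12 - κ6 * κ9) * β * t + b) * y + (γ * t + c) := fun t y ht hy =>
    nonneg_of_mul_nonneg_right (hscale t y ▸ hp _ _ y (mul_pos ht hx1) (mul_pos ht hx2) hy)
      (pow_pos ht 4)
  rw [← one_mul x1, ← one_mul x2, hscale, one_pow, one_mul]
  simpa only [mul_one] using pos_of_nonneg_of_scaling_family hα hβ hγ hc hf hx3

/-- The polynomial `p_η` is either strictly positive on the positive
orthant or attains a negative value there; equivalently, if it is nonnegative on the
positive orthant then it is strictly positive there. -/
theorem pEta_pos_or_neg
    (K1 K2 K3 K4 κ3 κ6 κ9 κ12 : ℝ)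
    (hK1 : 0 < K1) (hK2 : 0 < K2) (hK3 : 0 < K3) (hK4 : 0 < K4)
    (hκ3 : 0 < κ3) (hκ6 : 0 < κ6) (hκ9 : 0 < κ9) (hκ12 : 0 < κ12) :
    ((∀ x1 x2 x3 : ℝ, 0 < x1 → 0 < x2 → 0 < x3 →
        0 < pEta K1 K2 K3 K4 κ3 κ6 κ9 κ12 x1 x2 x3) ∨
      (∃ x1 x2 x3 : ℝ, 0 < x1 ∧ 0 < x2 ∧ 0 < x3 ∧
        pEta K1 K2 K3 K4 κ3 κ6 κ9 κ12 x1 x2 x3 < 0)) ∧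
    ((∀ x1 x2 x3 : ℝ, 0 < x1 → 0 < x2 → 0 < x3 →
        0 ≤ pEta K1 K2 K3 K4 κ3 κ6 κ9 κ12 x1 x2 x3) →
      (∀ x1 x2 x3 : ℝ, 0 < x1 → 0 < x2 → 0 < x3 →
        0 < pEta K1 K2 K3 K4 κ3 κ6 κ9 κ12 x1 x2 x3)) := by
  have pos_of_nonneg :=
    pEta_pos_of_nonneg K1 K2 K3 K4 κ3 κ6 κ9 κ12 hK1 hK2 hK3 hK4 hκ3 hκ6 hκ9 hκ12
  refine ⟨or_iff_not_imp_right.mpr fun hneg => ?_, fun hp _ _ _ => pos_of_nonneg hp⟩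
  refine fun x1 x2 x3 hx1 hx2 hx3 => pos_of_nonneg (fun y1 y2 y3 hy1 hy2 hy3 => ?_) hx1 hx2 hx3
  exact not_lt.mp fun hlt => hneg ⟨y1, y2, y3, hy1, hy2, hy3, hlt⟩
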